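/- arXiv:2303.00089 — 8 statements merged into one kernel-verified Lean document; each statement's English description precedes it below -/
import Mathlib

section
/- Let 1 < p ≤ 2, 0 < τ < 1, r > 1, and let s₀ ∈ (0,τ) satisfy ((p-1)·log((1-s₀)/(1-τ)) − log(s₀/τ)) / (2(2-p)) = log r. Then s₀ < 1 / (1 + r^(4-2p)·(1/τ − 1)). -/
/-! Write `A = (1 - s₀) / (1 - τ) > 1` and `B = s₀ / τ < 1`. The defining equation says
`(4 - 2p) log r = (p - 1) log A - log B`, and since `log A > 0` and `p - 1 < 1` this is strictly less
than `log (A / B)`. Exponentiating gives `r ^ (4 - 2p) < A / B`, which rearranges to the bound. -/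

open Real Set

theorem lt_one_div_one_add_mul_of_lt_div {s τ c : ℝ} (hs : 0 < s) (hτ0 : 0 < τ) (hτ1 : τ < 1)
    (hc : 0 ≤ c) (h : c < (1 - s) / (1 - τ) / (s / τ)) :
    s < 1 / (1 + c * (1 / τ - 1)) := by
  have hτ' : 0 < 1 - τ := sub_pos.mpr hτ1
  have hden : 0 < 1 + c * (1 / τ - 1) := by
    have : 0 ≤ 1 / τ - 1 := by rw [one_div, sub_nonneg]; exact one_le_inv₀ hτ0 |>.mpr hτ1.le
    positivity
  rw [lt_div_iff₀ (by positivity), lt_div_iff₀ hτ'] at h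
  rw [lt_div_iff₀ hden]
  field_simp at h ⊢
  linarith

theorem s_zero_upper_bound_general (p τ r s₀ : ℝ) (hp2 : p ≤ 2)
    (hτ1 : τ < 1) (hr : 1 < r) (hs₀ : s₀ ∈ Ioo 0 τ)
    (heq : ((p - 1) * Real.log ((1 - s₀) / (1 - τ)) - Real.log (s₀ / τ))
        / (2 * (2 - p)) = Real.log r) :
    s₀ < 1 / (1 + r ^ (4 - 2 * p) * (1 / τ - 1)) := by
  obtain ⟨hs0, hsτ⟩ := hs₀
  have hτ0 : 0 < τ := hs0.trans hsτ
  have hlogr : 0 < log r := log_pos hr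
  -- at `p = 2` the left side of `heq` divides by zero, so it reads `0 = log r`
  have hp : p < 2 := by
    rcases hp2.lt_or_eq with h | rfl
    · exact h
    · norm_num at heq
      linarith
  set A := (1 - s₀) / (1 - τ)
  have hA : 1 < A := (one_lt_div (by linarith)).mpr (by linarith)
  have hB : 0 < s₀ / τ := by positivity
  have hexponent : 2 * (2 - p) * log r = (p - 1) * log A - log (s₀ / τ) := by
    rw [← heq, mul_div_cancel₀ _ (by linarith)]
  have hgap : (p - 1) * log A < log A := mul_lt_of_lt_one_left (log_pos hA) (by linarith)
  have hlt : r ^ (4 - 2 * p) < A / (s₀ / τ) := by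
    rw [rpow_lt_iff_lt_log (by linarith) (by positivity), log_div (by positivity) hB.ne']
    linarith
  exact lt_one_div_one_add_mul_of_lt_div hs0 hτ0 hτ1 (by positivity) hlt

theorem s_zero_upper_bound (p τ r s₀ : ℝ) (hp1 : 1 < p) (hp2 : p ≤ 2)
    (hτ0 : 0 < τ) (hτ1 : τ < 1) (hr : 1 < r) (hs₀ : s₀ ∈ Ioo 0 τ)
    (heq : ((p - 1) * Real.log ((1 - s₀) / (1 - τ)) - Real.log (s₀ / τ))
        / (2 * (2 - p)) = Real.log r) :
    s₀ < 1 / (1 + r ^ (4 - 2 * p) * (1 / τ - 1)) :=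
  s_zero_upper_bound_general p τ r s₀ hp2 hτ1 hr hs₀ heq
end

section
/- Let 1 < p < 2 and let g : [1,∞) → (0,1) satisfy g'(t) = 2(2-p)(g(t)-1)g(t)/(t + (p-2)·t·g(t)). Then the function P(t) = t^(2-p) · (1 − g(t))^((1-p)/2) · √(g(t)) is constant, i.e., P'(t) = 0 for all t ≥ 1. -/
open Real Set

/-! Logarithmic differentiation: `P'/P = (2-p)/t - (1-p)/2 · g'/(1-g) + g'/(2g)`, and after
substituting the ODE for `g'` this is `(2-p)/(t(1+(p-2)g)) · ((1+(p-2)g) + (1-p)g + g - 1) = 0`. -/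

lemma hasDerivAt_rpow_mul_one_sub_rpow_mul_sqrt {g : ℝ → ℝ} {d t α β : ℝ} (ht : 0 < t)
    (hg0 : 0 < g t) (hg1 : g t < 1) (hg : HasDerivAt g d t) :
    HasDerivAt (fun s => s ^ α * (1 - g s) ^ β * √(g s))
      (t ^ α * (1 - g t) ^ β * √(g t) * (α / t - β * d / (1 - g t) + d / (2 * g t))) t := by
  have h1g : 0 < 1 - g t := sub_pos.mpr hg1
  have hpow : HasDerivAt (fun s : ℝ => s ^ α) (α * t ^ (α - 1)) t :=
    hasDerivAt_rpow_const (Or.inl ht.ne')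
  have hone_sub : HasDerivAt (fun s => (1 - g s) ^ β) (-d * β * (1 - g t) ^ (β - 1)) t := by
    simpa using ((hasDerivAt_const t 1).sub hg).rpow_const (p := β) (Or.inl h1g.ne')
  have hsqrt : HasDerivAt (fun s => √(g s)) (d / (2 * √(g t))) t := hg.sqrt hg0.ne'
  refine ((hpow.mul hone_sub).mul hsqrt).congr_deriv ?_
  have hsqrt_div : d / (2 * √(g t)) = √(g t) * d / (2 * g t) := by
    rw [div_eq_div_iff (by positivity) (by positivity)]
    linear_combination (-2 * d) * mul_self_sqrt hg0.le
  rw [Pi.mul_apply, hsqrt_div, rpow_sub ht, rpow_one, rpow_sub h1g, rpow_one]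
  field_simp
  ring

lemma euler_lagrange_logDeriv_eq_zero {p t a d : ℝ} (ht : t ≠ 0) (ha : a ≠ 0) (ha1 : 1 - a ≠ 0)
    (hD : 1 + (p - 2) * a ≠ 0) (hd : d = 2 * (2 - p) * (a - 1) * a / (t + (p - 2) * t * a)) :
    (2 - p) / t - (1 - p) / 2 * d / (1 - a) + d / (2 * a) = 0 := by
  rw [hd, show t + (p - 2) * t * a = t * (1 + (p - 2) * a) by ring]
  generalize hD' : 1 + (p - 2) * a = D at hD
  field_simp
  linear_combination (p - 2) * (1 - a) * hD'

lemma one_add_sub_two_mul_pos {p a : ℝ} (hp : 1 < p) (ha0 : 0 ≤ a) (ha1 : a < 1) :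
    0 < 1 + (p - 2) * a := by
  nlinarith

theorem P_is_constant_general (p : ℝ) (hp1 : 1 < p) (g : ℝ → ℝ)
    (hrange : ∀ t ∈ Ici (1 : ℝ), g t ∈ Ioo (0 : ℝ) 1)
    (hode : ∀ t ∈ Ici (1 : ℝ),
      HasDerivAt g (2 * (2 - p) * (g t - 1) * g t / (t + (p - 2) * t * g t)) t) :
    ∀ t ∈ Ici (1 : ℝ),
      HasDerivAt (fun t => t ^ (2 - p) * (1 - g t) ^ ((1 - p) / 2) * Real.sqrt (g t))
        0 t := by
  intro t ht
  have ht0 : 0 < t := zero_lt_one.trans_le ht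
  obtain ⟨hg0, hg1⟩ := hrange t ht
  have hD := one_add_sub_two_mul_pos hp1 hg0.le hg1
  convert hasDerivAt_rpow_mul_one_sub_rpow_mul_sqrt ht0 hg0 hg1 (hode t ht) using 1
  rw [euler_lagrange_logDeriv_eq_zero ht0.ne' hg0.ne' (sub_pos.mpr hg1).ne' hD.ne' rfl, mul_zero]

theorem P_is_constant (p : ℝ) (hp1 : 1 < p) (hp2 : p < 2) (g : ℝ → ℝ)
    (hrange : ∀ t ∈ Ici (1 : ℝ), g t ∈ Ioo (0 : ℝ) 1)
    (hode : ∀ t ∈ Ici (1 : ℝ),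
      HasDerivAt g (2 * (2 - p) * (g t - 1) * g t / (t + (p - 2) * t * g t)) t) :
    ∀ t ∈ Ici (1 : ℝ),
      HasDerivAt (fun t => t ^ (2 - p) * (1 - g t) ^ ((1 - p) / 2) * Real.sqrt (g t))
        0 t :=
  P_is_constant_general p hp1 g hrange hode
end

section
/- Let H : [1,r] → ℝ be a positive C² function satisfying the ODE −t·H·(H')² + t²·(H')³ + H²·(2H' + t·H'') = 0 with H' > 0. Then the function g(t) := (t·H'(t)/H(t))² / (1 + (t·H'(t)/H(t))²) satisfies 2g(t) + t·g'(t) = 0, so g(t) = b·t^(−2) for some constant b > 0. -/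
/-!
Write `u = t H' / H` for the logarithmic derivative of `H` against `log t`. Dividing the
Euler–Lagrange equation by `H³ / t` turns it into the Riccati-type equation
`t u' = -u (1 + u²)`, and then `g = u² / (1 + u²)` satisfies `t g' = 2 u (t u') / (1 + u²)² = -2 g`.
Hence `t² g` has zero derivative and is constant, so `g = g(1) t⁻²` with `g(1) > 0` because `H' > 0`.
-/

open Real Set

lemma hasDerivAt_sq_div_one_add_sq {u : ℝ → ℝ} {u' t : ℝ} (hu : HasDerivAt u u' t) :
    HasDerivAt (fun s => u s ^ 2 / (1 + u s ^ 2)) (2 * u t * u' / (1 + u t ^ 2) ^ 2) t := by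
  have hden : 1 + u t ^ 2 ≠ 0 := by positivity
  refine ((hu.pow 2).div ((hu.pow 2).const_add 1) hden).congr_deriv ?_
  simp only [Pi.pow_apply]
  field_simp
  ring

lemma hasDerivAt_mul_div_of_euler_lagrange {H H' : ℝ → ℝ} {H'' t : ℝ}
    (hH : HasDerivAt H (H' t) t) (hH' : HasDerivAt H' H'' t) (ht : t ≠ 0) (hHt : H t ≠ 0)
    (hode : -t * H t * H' t ^ 2 + t ^ 2 * H' t ^ 3 + H t ^ 2 * (2 * H' t + t * H'') = 0) :
    HasDerivAt (fun s => s * H' s / H s)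
      (-(t * H' t / H t) * (1 + (t * H' t / H t) ^ 2) / t) t := by
  refine (((hasDerivAt_id t).mul hH').div hH hHt).congr_deriv ?_
  simp only [Pi.mul_apply, id]
  field_simp
  linear_combination hode

lemma hasDerivAt_sq_div_one_add_sq_of_euler_lagrange {H H' : ℝ → ℝ} {H'' t : ℝ}
    (hH : HasDerivAt H (H' t) t) (hH' : HasDerivAt H' H'' t) (ht : t ≠ 0) (hHt : H t ≠ 0)
    (hode : -t * H t * H' t ^ 2 + t ^ 2 * H' t ^ 3 + H t ^ 2 * (2 * H' t + t * H'') = 0) :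
    HasDerivAt (fun s => (s * H' s / H s) ^ 2 / (1 + (s * H' s / H s) ^ 2))
      (-2 * ((t * H' t / H t) ^ 2 / (1 + (t * H' t / H t) ^ 2)) / t) t := by
  refine (hasDerivAt_sq_div_one_add_sq
    (hasDerivAt_mul_div_of_euler_lagrange hH hH' ht hHt hode)).congr_deriv ?_
  have hden : 1 + (t * H' t / H t) ^ 2 ≠ 0 := by positivity
  field_simp

lemma eq_mul_rpow_neg_two_of_two_mul_add_mul_deriv_eq_zero {f f' : ℝ → ℝ} {a b : ℝ} (ha : 0 < a)
    (hf : ∀ t ∈ Icc a b, HasDerivAt f (f' t) t)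
    (hode : ∀ t ∈ Icc a b, 2 * f t + t * f' t = 0) :
    ∀ t ∈ Icc a b, f t = a ^ 2 * f a * t ^ (-2 : ℝ) := by
  have hderiv : ∀ t ∈ Icc a b, HasDerivAt (fun s => s ^ 2 * f s) 0 t := fun t ht => by
    refine ((hasDerivAt_pow 2 t).mul (hf t ht)).congr_deriv ?_
    push_cast
    linear_combination t * hode t ht
  have hconst := constant_of_has_deriv_right_zero
    (fun t ht => (hderiv t ht).continuousAt.continuousWithinAt)
    (fun t ht => (hderiv t (Ico_subset_Icc_self ht)).hasDerivWithinAt)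
  intro t ht
  have ht0 : 0 < t := ha.trans_le ht.1
  rw [rpow_neg ht0.le, rpow_two, ← hconst t ht]
  field_simp

theorem p_one_EL_gives_g (r : ℝ) (hr : 1 < r) (H H' H'' : ℝ → ℝ)
    (hH : ∀ t ∈ Icc 1 r, HasDerivAt H (H' t) t)
    (hH' : ∀ t ∈ Icc 1 r, HasDerivAt H' (H'' t) t)
    (hpos : ∀ t ∈ Icc 1 r, 0 < H t)
    (hinc : ∀ t ∈ Icc 1 r, 0 < H' t)
    (hode : ∀ t ∈ Icc 1 r,
      -t * H t * (H' t) ^ 2 + t ^ 2 * (H' t) ^ 3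
        + (H t) ^ 2 * (2 * H' t + t * H'' t) = 0)
    (g : ℝ → ℝ)
    (hg : ∀ t, g t = (t * H' t / H t) ^ 2 / (1 + (t * H' t / H t) ^ 2)) :
    (∀ t ∈ Ioo 1 r, 2 * g t + t * deriv g t = 0) ∧
      ∃ b > (0 : ℝ), ∀ t ∈ Icc 1 r, g t = b * t ^ (-2 : ℝ) := by
  have hg_deriv : ∀ t ∈ Icc 1 r, HasDerivAt g (-2 * g t / t) t := fun t ht => by
    rw [funext hg]
    exact hasDerivAt_sq_div_one_add_sq_of_euler_lagrange (hH t ht) (hH' t ht)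
      (by linarith [ht.1]) (hpos t ht).ne' (hode t ht)
  have hg_euler : ∀ t ∈ Icc 1 r, 2 * g t + t * (-2 * g t / t) = 0 := fun t ht => by
    have : t ≠ 0 := by linarith [ht.1]
    field_simp
    ring
  refine ⟨fun t ht => ?_, g 1, ?_, fun t ht => ?_⟩
  · rw [(hg_deriv t (Ioo_subset_Icc_self ht)).deriv]
    exact hg_euler t (Ioo_subset_Icc_self ht)
  · have h1 : (1 : ℝ) ∈ Icc 1 r := left_mem_Icc.mpr hr.le
    rw [hg 1]
    have := hpos 1 h1
    have := hinc 1 h1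
    positivity
  · simpa using eq_mul_rpow_neg_two_of_two_mul_add_mul_deriv_eq_zero one_pos hg_deriv hg_euler t ht
end

section
/- For fixed t > 1, the function b ↦ exp(arccot(√(b²−1)) − arccot(√(b²t²−1))), defined for b ≥ 1, is strictly decreasing in b. -/
/-! Since `arccot = π/2 - arctan`, the exponent is `φ (b t) - φ b` with `φ x = arctan √(x² - 1)`.
For any `f`, `b ↦ f (b t) - f b` has derivative `(b t f'(b t) - b f'(b)) / b`, so it decreases
as soon as `x f'(x)` does; here `x φ'(x) = 1 / √(x² - 1)`. -/

open Real Set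

noncomputable def arccot (x : ℝ) : ℝ := Real.pi / 2 - Real.arctan x

theorem strictAntiOn_comp_mul_sub {f f' : ℝ → ℝ} {a t : ℝ} (ha : 0 ≤ a) (ht : 1 < t)
    (hcont : ContinuousOn f (Ici a)) (hderiv : ∀ x, a < x → HasDerivAt f (f' x) x)
    (hanti : StrictAntiOn (fun x => x * f' x) (Ioi a)) :
    StrictAntiOn (fun b => f (b * t) - f b) (Ici a) := by
  apply strictAntiOn_of_deriv_neg (convex_Ici a)
  · have hmaps : MapsTo (· * t) (Ici a) (Ici a) := fun b (hb : a ≤ b) =>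
      show a ≤ b * t from hb.trans (le_mul_of_one_le_right (ha.trans hb) ht.le)
    exact (hcont.comp (continuousOn_id.mul continuousOn_const) hmaps).sub hcont
  · intro b hb
    rw [interior_Ici] at hb
    have hb0 : 0 < b := ha.trans_lt hb
    have hbt : b < b * t := lt_mul_of_one_lt_right hb0 ht
    have hd : HasDerivAt (fun b => f (b * t) - f b) (f' (b * t) * t - f' b) b := by
      have hinner : HasDerivAt (· * t) t b := by simpa using (hasDerivAt_id b).mul_const t
      exact ((hderiv _ (hb.trans hbt)).comp b hinner).sub (hderiv b hb)
    have hdecr : b * t * f' (b * t) < b * f' b := hanti hb (hb.trans hbt) hbt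
    have hform : f' (b * t) * t - f' b = (b * t * f' (b * t) - b * f' b) / b := by
      field_simp
    rw [hd.deriv, hform]
    exact div_neg_of_neg_of_pos (sub_neg.2 hdecr) hb0

theorem hasDerivAt_arctan_sqrt_sq_sub_one {x : ℝ} (hx : 1 < x) :
    HasDerivAt (fun x => arctan √(x ^ 2 - 1)) (1 / (x * √(x ^ 2 - 1))) x := by
  have hpos : 0 < x ^ 2 - 1 := by nlinarith
  have hsq : HasDerivAt (fun x => x ^ 2 - 1) (2 * x) x := by
    simpa using (hasDerivAt_pow 2 x).sub_const 1
  have h := (hasDerivAt_arctan _).comp x ((hasDerivAt_sqrt hpos.ne').comp x hsq)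
  refine h.congr_deriv ?_
  have hs : √(x ^ 2 - 1) ^ 2 = x ^ 2 - 1 := sq_sqrt hpos.le
  have hs0 : √(x ^ 2 - 1) ≠ 0 := (sqrt_pos.2 hpos).ne'
  have hx0 : x ≠ 0 := by positivity
  simp only [Function.comp_apply, hs]
  field_simp
  ring

theorem strictAntiOn_one_div_sqrt_sq_sub_one :
    StrictAntiOn (fun x : ℝ => 1 / √(x ^ 2 - 1)) (Ioi 1) := by
  intro x (hx : 1 < x) y (hy : 1 < y) hxy
  have hx' : 0 < x ^ 2 - 1 := by nlinarith
  exact one_div_lt_one_div_of_lt (sqrt_pos.2 hx') (sqrt_lt_sqrt hx'.le (by nlinarith))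

theorem H_strict_anti_in_b (t : ℝ) (ht : 1 < t) :
    StrictAntiOn (fun b : ℝ => Real.exp (arccot (Real.sqrt (b ^ 2 - 1))
      - arccot (Real.sqrt (b ^ 2 * t ^ 2 - 1)))) (Ici 1) := by
  have hanti : StrictAntiOn (fun b => arctan √((b * t) ^ 2 - 1) - arctan √(b ^ 2 - 1)) (Ici 1) :=
    strictAntiOn_comp_mul_sub zero_le_one ht (by fun_prop)
      (fun x hx => hasDerivAt_arctan_sqrt_sq_sub_one hx)
      (strictAntiOn_one_div_sqrt_sq_sub_one.congr fun x (hx : 1 < x) => by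
        have : x ≠ 0 := by positivity
        field_simp)
  have heq : ∀ b : ℝ, arccot √(b ^ 2 - 1) - arccot √(b ^ 2 * t ^ 2 - 1)
      = arctan √((b * t) ^ 2 - 1) - arctan √(b ^ 2 - 1) := fun b => by
    rw [arccot, arccot, mul_pow]
    ring
  simpa only [heq, Function.comp_def] using exp_strictMono.comp_strictAntiOn hanti
end

section
/- Let r > 1 and R > 1. There exists b ≥ 1 such that the function H(t) = exp(arccot(√(b²−1)) − arccot(√(b²t²−1))) maps [1,r] onto [1,R] (i.e., H(r) = R) if and only if log R ≤ π/2 − arctan(1/√(r²−1)). -/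
open Real Set

/-!
Writing `log H(r) = arctan √(b²r² - 1) - arctan √(b² - 1)`, the addition formula for `arctan`
shows that this quantity is at most its value `arctan √(r² - 1)` at `b = 1`. Conversely it is
continuous in `b` and smaller than `π/2 - arctan √(b² - 1)`, which tends to `0`, so the
intermediate value theorem attains every value of `(0, arctan √(r² - 1)]`.
-/

noncomputable def radialExponent (r b : ℝ) : ℝ :=
  arctan √(b ^ 2 * r ^ 2 - 1) - arctan √(b ^ 2 - 1)

lemma arccot_sub_arccot_eq_radialExponent (r b : ℝ) :
    arccot √(b ^ 2 - 1) - arccot √(b ^ 2 * r ^ 2 - 1) = radialExponent r b := by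
  unfold arccot radialExponent
  ring

lemma radialExponent_one (r : ℝ) : radialExponent r 1 = arctan √(r ^ 2 - 1) := by
  simp [radialExponent]

lemma continuous_radialExponent (r : ℝ) : Continuous (radialExponent r) := by
  unfold radialExponent
  fun_prop

lemma radialExponent_lt (r b : ℝ) : radialExponent r b < π / 2 - arctan √(b ^ 2 - 1) := by
  unfold radialExponent
  linarith [arctan_lt_pi_div_two √(b ^ 2 * r ^ 2 - 1)]

lemma arctan_le_arctan_add_of_sub_le {x y s : ℝ} (hs : 0 ≤ s)
    (h : y - x ≤ s * (1 + x * y)) : arctan y ≤ arctan x + arctan s := by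
  rcases lt_or_ge (x * s) 1 with hxs | hxs
  · rw [arctan_add hxs]
    apply arctan_strictMono.monotone
    rw [le_div_iff₀ (by linarith)]
    nlinarith
  · -- here `arctan x + arctan s ≥ arctan s⁻¹ + arctan s = π/2`
    have hs' : 0 < s := hs.lt_of_ne (by rintro rfl; simp at hxs; linarith)
    have hinv : s⁻¹ ≤ x := by
      rw [inv_le_iff_one_le_mul₀ hs']
      linarith [mul_comm x s]
    have := arctan_strictMono.monotone hinv
    rw [arctan_inv_of_pos hs'] at this
    linarith [arctan_lt_pi_div_two y]

lemma radialExponent_le {r b : ℝ} (hr : 1 ≤ r) (hb : 1 ≤ b) :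
    radialExponent r b ≤ arctan √(r ^ 2 - 1) := by
  set s := √(r ^ 2 - 1)
  set x := √(b ^ 2 - 1)
  set y := √(b ^ 2 * r ^ 2 - 1)
  have hr₀ : 0 ≤ r := by linarith
  have hs : 0 ≤ s := sqrt_nonneg _
  have hx : 0 ≤ x := sqrt_nonneg _
  have hs_sq : s ^ 2 = r ^ 2 - 1 := sq_sqrt (by nlinarith)
  have hx_sq : x ^ 2 = b ^ 2 - 1 := sq_sqrt (by nlinarith)
  have hy_sq : y ^ 2 = b ^ 2 * r ^ 2 - 1 := sq_sqrt (by nlinarith)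
  -- `y² = x²r² + s²`
  have hy_le : y ≤ x * r + s := by
    nlinarith [sqrt_nonneg (b ^ 2 * r ^ 2 - 1), mul_nonneg hx hr₀, mul_nonneg (mul_nonneg hx hr₀) hs]
  have hs_le : s ≤ y := sqrt_le_sqrt (by nlinarith)
  have hkey : y - x ≤ s * (1 + x * y) := by
    nlinarith [mul_le_mul_of_nonneg_left (mul_le_mul_of_nonneg_left hs_le hs) hx]
  have := arctan_le_arctan_add_of_sub_le hs hkey
  unfold radialExponent
  linarith

lemma exists_one_le_sqrt_sq_sub_one_eq {t : ℝ} (ht : 0 ≤ t) :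
    ∃ b : ℝ, 1 ≤ b ∧ √(b ^ 2 - 1) = t := by
  refine ⟨√(t ^ 2 + 1), one_le_sqrt.2 (by nlinarith), ?_⟩
  rw [sq_sqrt (by positivity), add_sub_cancel_right, sqrt_sq ht]

lemma exists_radialExponent_lt (r : ℝ) {L : ℝ} (hL₀ : 0 < L) (hL : L < π / 2) :
    ∃ b : ℝ, 1 ≤ b ∧ radialExponent r b < L := by
  obtain ⟨b, hb, hbt⟩ := exists_one_le_sqrt_sq_sub_one_eq
    (tan_nonneg_of_nonneg_of_le_pi_div_two (by linarith) (by linarith) : 0 ≤ tan (π / 2 - L))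
  refine ⟨b, hb, ?_⟩
  have := radialExponent_lt r b
  rwa [hbt, arctan_tan (by linarith [pi_pos]) (by linarith), sub_sub_cancel] at this

lemma exists_radialExponent_eq (r : ℝ) {L : ℝ} (hL₀ : 0 < L) (hL : L ≤ arctan √(r ^ 2 - 1)) :
    ∃ b : ℝ, 1 ≤ b ∧ radialExponent r b = L := by
  obtain ⟨B, hB, hBL⟩ := exists_radialExponent_lt r hL₀
    (hL.trans_lt (arctan_lt_pi_div_two _))
  obtain ⟨b, hb, hbL⟩ := intermediate_value_Icc' hB (continuous_radialExponent r).continuousOn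
    ⟨hBL.le, (radialExponent_one r).symm ▸ hL⟩
  exact ⟨b, hb.1, hbL⟩

theorem radial_homeo_existence_iff (r R : ℝ) (hr : 1 < r) (hR : 1 < R) :
    (∃ b : ℝ, 1 ≤ b ∧ Real.exp (arccot (Real.sqrt (b ^ 2 - 1))
        - arccot (Real.sqrt (b ^ 2 * r ^ 2 - 1))) = R)
      ↔ Real.log R ≤ Real.pi / 2 - Real.arctan (1 / Real.sqrt (r ^ 2 - 1)) := by
  have hs : 0 < √(r ^ 2 - 1) := sqrt_pos.2 (by nlinarith)
  rw [one_div, arctan_inv_of_pos hs, sub_sub_cancel]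
  simp_rw [arccot_sub_arccot_eq_radialExponent]
  constructor
  · rintro ⟨b, hb, rfl⟩
    rw [log_exp]
    exact radialExponent_le hr.le hb
  · intro hle
    obtain ⟨b, hb, hbR⟩ := exists_radialExponent_eq r (log_pos hR) hle
    exact ⟨b, hb, by rw [hbR, exp_log (by linarith)]⟩
end

section
/- Let b ≥ 1 and r > 1. For every C¹ increasing function H : [1,r] → ℝ with H(1) = 1, H(r) = R, H > 0, the inequality ∫₁^r √(1 + t²·H'(t)²/H(t)²) dt ≥ ∫₁^r √(1 − 1/(b²t²)) dt + (1/b)·log R holds. -/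
/-! Apply Cauchy–Schwarz pointwise with the unit vector `(√(1 - 1/(bt)²), 1/(bt))`:
`√(1 + (t H'/H)²) ≥ √(1 - 1/(b²t²)) + (1/b) · H'/H`. Integrating over `[1, r]`, the last term
integrates to `(1/b) log H(r) = (1/b) log R`, since `H'/H` is the derivative of `log H`. -/

open Real Set intervalIntegral

theorem mul_add_mul_le_sqrt_sq_add_sq {c s : ℝ} (hcs : c ^ 2 + s ^ 2 = 1) (x y : ℝ) :
    c * x + s * y ≤ √(x ^ 2 + y ^ 2) :=
  le_sqrt_of_sq_le <| by nlinarith [sq_nonneg (s * x - c * y)]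

theorem sqrt_one_sub_sq_add_mul_le {a : ℝ} (ha : a ^ 2 ≤ 1) (y : ℝ) :
    √(1 - a ^ 2) + a * y ≤ √(1 + y ^ 2) := by
  have hcs : √(1 - a ^ 2) ^ 2 + a ^ 2 = 1 := by
    rw [sq_sqrt (by linarith)]
    ring
  simpa using mul_add_mul_le_sqrt_sq_add_sq hcs 1 y

theorem integral_div_eq_log_sub_log {H H' : ℝ → ℝ} {a b : ℝ}
    (hH : ∀ t ∈ uIcc a b, HasDerivAt H (H' t) t) (hne : ∀ t ∈ uIcc a b, H t ≠ 0)
    (hint : IntervalIntegrable (fun t => H' t / H t) MeasureTheory.volume a b) :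
    ∫ t in a..b, H' t / H t = log (H b) - log (H a) :=
  integral_eq_sub_of_hasDerivAt (fun t ht => (hH t ht).log (hne t ht)) hint

theorem sqrt_one_sub_div_add_le {b t : ℝ} (hbt : 1 ≤ b * t) (x y : ℝ) :
    √(1 - 1 / (b ^ 2 * t ^ 2)) + 1 / b * (x / y) ≤ √(1 + t ^ 2 * x ^ 2 / y ^ 2) := by
  have hbt0 : 0 < b * t := one_pos.trans_le hbt
  obtain ⟨hb, ht⟩ := mul_ne_zero_iff.mp hbt0.ne'
  have ha : (1 / (b * t)) ^ 2 ≤ 1 := by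
    rw [div_pow, one_pow, div_le_one (by positivity)]
    exact one_le_pow₀ hbt
  have e1 : 1 / (b ^ 2 * t ^ 2) = (1 / (b * t)) ^ 2 := by ring
  have e2 : 1 / b * (x / y) = 1 / (b * t) * (t * x / y) := by field_simp
  have e3 : t ^ 2 * x ^ 2 / y ^ 2 = (t * x / y) ^ 2 := by ring
  rw [e1, e2, e3]
  exact sqrt_one_sub_sq_add_mul_le ha _

theorem energy_lower_bound_p_one_general (b r R : ℝ) (hb : 1 ≤ b) (hr : 1 < r)
    (H H' : ℝ → ℝ)
    (hH : ∀ t ∈ Icc 1 r, HasDerivAt H (H' t) t)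
    (hH'c : ContinuousOn H' (Icc 1 r))
    (hpos : ∀ t ∈ Icc 1 r, 0 < H t)
    (h1 : H 1 = 1) (hrR : H r = R) :
    ∫ t in (1 : ℝ)..r, Real.sqrt (1 + t ^ 2 * (H' t) ^ 2 / (H t) ^ 2)
      ≥ (∫ t in (1 : ℝ)..r, Real.sqrt (1 - 1 / (b ^ 2 * t ^ 2)))
        + (1 / b) * Real.log R := by
  have hne : ∀ t ∈ Icc 1 r, H t ≠ 0 := fun t ht => (hpos t ht).ne'
  have hHc : ContinuousOn H (Icc 1 r) := fun t ht => (hH t ht).continuousAt.continuousWithinAt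
  have hq : IntervalIntegrable (fun t => H' t / H t) MeasureTheory.volume 1 r :=
    (hH'c.div hHc hne).intervalIntegrable_of_Icc hr.le
  have hf : IntervalIntegrable (fun t => √(1 + t ^ 2 * (H' t) ^ 2 / (H t) ^ 2))
      MeasureTheory.volume 1 r :=
    ContinuousOn.intervalIntegrable_of_Icc hr.le <| by
      refine (continuousOn_const.add ?_).sqrt
      exact (continuousOn_id.pow 2 |>.mul (hH'c.pow 2)).div (hHc.pow 2)
        fun t ht => pow_ne_zero 2 (hne t ht)
  have hg : IntervalIntegrable (fun t : ℝ => √(1 - 1 / (b ^ 2 * t ^ 2)))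
      MeasureTheory.volume 1 r :=
    ContinuousOn.intervalIntegrable_of_Icc hr.le <|
      (continuousOn_const.sub <| continuousOn_const.div (by fun_prop)
        fun t ht => by have := ht.1; positivity).sqrt
  have hlog : ∫ t in (1 : ℝ)..r, H' t / H t = log R := by
    rw [integral_div_eq_log_sub_log (by rwa [uIcc_of_le hr.le]) (by rwa [uIcc_of_le hr.le]) hq,
      h1, hrR, log_one, sub_zero]
  calc (∫ t in (1 : ℝ)..r, √(1 - 1 / (b ^ 2 * t ^ 2))) + 1 / b * log R
      = ∫ t in (1 : ℝ)..r, √(1 - 1 / (b ^ 2 * t ^ 2)) + 1 / b * (H' t / H t) := by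
        rw [integral_add hg (hq.const_mul _), integral_const_mul, hlog]
    _ ≤ _ := integral_mono_on hr.le (hg.add (hq.const_mul _)) hf
        fun t ht => sqrt_one_sub_div_add_le (one_le_mul_of_one_le_of_one_le hb ht.1) _ _

theorem energy_lower_bound_p_one (b r R : ℝ) (hb : 1 ≤ b) (hr : 1 < r)
    (H H' : ℝ → ℝ)
    (hH : ∀ t ∈ Icc 1 r, HasDerivAt H (H' t) t)
    (hH'c : ContinuousOn H' (Icc 1 r))
    (hinc : ∀ t ∈ Icc 1 r, 0 ≤ H' t)
    (hpos : ∀ t ∈ Icc 1 r, 0 < H t)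
    (h1 : H 1 = 1) (hrR : H r = R) :
    ∫ t in (1 : ℝ)..r, Real.sqrt (1 + t ^ 2 * (H' t) ^ 2 / (H t) ^ 2)
      ≥ (∫ t in (1 : ℝ)..r, Real.sqrt (1 - 1 / (b ^ 2 * t ^ 2)))
        + (1 / b) * Real.log R :=
  energy_lower_bound_p_one_general b r R hb hr H H' hH hH'c hpos h1 hrR
end

section
/- Let 1 < p < 2, r > 1, and let h(z) = H(t)e^{iθ} (z = t·e^{iθ}) be a radial map with H : [1,r] → [1,R] a C¹ increasing bijection. Suppose g : [1,r] → (0,1) satisfies g'(t) = 2(2-p)(g(t)-1)g(t)/(t+(p-2)tg(t)) and H₀ satisfies t·H₀'(t)/H₀(t) = √(g(t))/√(1−g(t)) with H₀(1)=1, H₀(r)=R. Then ∫₁^r t·(1/t² + H'(t)²/H(t)²)^{p/2} dt ≥ ∫₁^r t·(1/t² + H₀'(t)²/H₀(t)²)^{p/2} dt. -/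
/-!
For `1 ≤ p ≤ 2` the energy density `L(t, y) = t (1/t² + y²)^(p/2)` is convex in the logarithmic
derivative `y = H'/H`, and its tangent line at `y₀ = H₀'/H₀` has slope `p P(t)`. Along the
Euler–Lagrange equation satisfied by `g` this slope is constant, so
`L(t, H'/H) ≥ L(t, H₀'/H₀) + p P(1) (H'/H - H₀'/H₀)`, and the last term integrates to
`p P(1) (log (H r / H₀ r) - log (H 1 / H₀ 1)) = 0` because `H` and `H₀` share their boundary
values. The tangent-line bound is obtained by splitting `(1/t² + y²)^(p/2)` with the concavity of
`u ↦ u^(p/2)`, with weights chosen so that equality holds at `y₀`, and then bounding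
`(y²)^(p/2) = |y|^p` from below by its tangent at `y₀`.
-/

open Real Set intervalIntegral
open MeasureTheory (volume)

theorem weighted_rpow_add_rpow_le_add_rpow {q a b s : ℝ} (hq0 : 0 ≤ q) (hq1 : q ≤ 1)
    (ha : 0 ≤ a) (hb : 0 ≤ b) (hs : s ∈ Ioo 0 1) :
    (1 - s) ^ (1 - q) * a ^ q + s ^ (1 - q) * b ^ q ≤ (a + b) ^ q := by
  obtain ⟨hs0, hs1⟩ := hs
  have h1s : 0 < 1 - s := by linarith
  have hconc := (concaveOn_rpow hq0 hq1).2 (x := a / (1 - s)) (y := b / s)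
    (mem_Ici.2 (by positivity)) (mem_Ici.2 (by positivity)) h1s.le hs0.le (by ring)
  have hmean : (1 - s) • (a / (1 - s)) + s • (b / s) = a + b := by
    simp only [smul_eq_mul]; field_simp
  rw [hmean, smul_eq_mul, smul_eq_mul] at hconc
  beta_reduce at hconc
  rw [div_rpow ha h1s.le, div_rpow hb hs0.le] at hconc
  refine le_of_eq_of_le ?_ hconc
  rw [rpow_sub h1s, rpow_sub hs0, rpow_one, rpow_one]
  have : 0 < (1 - s) ^ q := rpow_pos_of_pos h1s q
  have : 0 < s ^ q := rpow_pos_of_pos hs0 q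
  field_simp

theorem rpow_tangent_le_rpow {p x u : ℝ} (hp : 1 ≤ p) (hx : 0 < x) (hu : 0 ≤ u) :
    x ^ p + p * x ^ (p - 1) * (u - x) ≤ u ^ p := by
  have hbernoulli := one_add_mul_self_le_rpow_one_add (s := u / x - 1)
    (by linarith [div_nonneg hu hx.le]) hp
  rw [add_sub_cancel, div_rpow hu hx.le, le_div_iff₀ (rpow_pos_of_pos hx p)] at hbernoulli
  calc x ^ p + p * x ^ (p - 1) * (u - x) = (1 + p * (u / x - 1)) * x ^ p := by
        rw [rpow_sub_one hx.ne']; field_simp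
    _ ≤ u ^ p := hbernoulli

theorem rpow_add_sq_tangent_le {p a x : ℝ} (hp1 : 1 ≤ p) (hp2 : p ≤ 2) (ha : 0 < a)
    (hx : 0 < x) (y : ℝ) :
    (a + x ^ 2) ^ (p / 2) + p * x * (a + x ^ 2) ^ (p / 2 - 1) * (y - x)
      ≤ (a + y ^ 2) ^ (p / 2) := by
  have hsq : ∀ z : ℝ, 0 ≤ z → (z ^ 2) ^ (p / 2) = z ^ p := fun z hz => by
    rw [← rpow_natCast, ← rpow_mul hz]; norm_num; ring_nf
  set S := a + x ^ 2 with hSdef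
  have hS : 0 < S := by positivity
  -- the weight for which the concavity inequality is an equality at `y = x`
  set s := x ^ 2 / S with hsdef
  have hs : s ∈ Ioo 0 1 := ⟨by positivity, (div_lt_one hS).2 (by linarith)⟩
  have h1s : 1 - s = a / S := by rw [hsdef, hSdef]; field_simp; ring
  have hsplit : S ^ (p / 2) + p * x * S ^ (p / 2 - 1) * (y - x)
      = (1 - s) ^ (1 - p / 2) * a ^ (p / 2)
        + s ^ (1 - p / 2) * (x ^ p + p * x ^ (p - 1) * (y - x)) := by
    rw [h1s, hsdef, div_rpow ha.le hS.le, div_rpow (sq_nonneg x) hS.le, rpow_sub ha,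
      rpow_sub hS, rpow_sub hS, rpow_sub (sq_pos_of_pos hx), rpow_sub_one hx.ne',
      rpow_one, rpow_one, rpow_one, hsq x hx.le]
    have : 0 < a ^ (p / 2) := rpow_pos_of_pos ha _
    have : 0 < x ^ p := rpow_pos_of_pos hx _
    have : 0 < S ^ (p / 2) := rpow_pos_of_pos hS _
    field_simp
    ring
  rw [hsplit]
  calc (1 - s) ^ (1 - p / 2) * a ^ (p / 2) + s ^ (1 - p / 2) * (x ^ p + p * x ^ (p - 1) * (y - x))
    _ ≤ (1 - s) ^ (1 - p / 2) * a ^ (p / 2)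
        + s ^ (1 - p / 2) * (x ^ p + p * x ^ (p - 1) * (|y| - x)) := by
      have : 0 ≤ p := by linarith
      gcongr
      exact le_abs_self y
    _ ≤ (1 - s) ^ (1 - p / 2) * a ^ (p / 2) + s ^ (1 - p / 2) * (y ^ 2) ^ (p / 2) := by
      rw [← sq_abs, hsq _ (abs_nonneg y)]
      gcongr
      exact rpow_tangent_le_rpow hp1 hx (abs_nonneg y)
    _ ≤ (a + y ^ 2) ^ (p / 2) :=
      weighted_rpow_add_rpow_le_add_rpow (by linarith) (by linarith) ha.le (sq_nonneg y) hs

noncomputable def radialEnergyDensity (p t y : ℝ) : ℝ :=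
  t * (1 / t ^ 2 + y ^ 2) ^ (p / 2)

/-- The quantity `P(t)` of the paper: `p P(t)` is the slope `∂L/∂y` of the energy density at the
log-derivative `y₀ = √g / (t √(1 - g))` of the candidate minimizer. -/
noncomputable def firstIntegral (p : ℝ) (g : ℝ → ℝ) (t : ℝ) : ℝ :=
  t ^ (2 - p) * (1 - g t) ^ ((1 - p) / 2) * √(g t)

noncomputable def logFirstIntegral (p : ℝ) (g : ℝ → ℝ) (t : ℝ) : ℝ :=
  (2 - p) * log t + (1 - p) / 2 * log (1 - g t) + 1 / 2 * log (g t)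

theorem firstIntegral_pos {p t : ℝ} {g : ℝ → ℝ} (ht : 0 < t) (hg : g t ∈ Ioo 0 1) :
    0 < firstIntegral p g t := by
  have := sub_pos.2 hg.2
  have := sqrt_pos.2 hg.1
  unfold firstIntegral; positivity

theorem log_firstIntegral {p t : ℝ} {g : ℝ → ℝ} (ht : 0 < t) (hg : g t ∈ Ioo 0 1) :
    log (firstIntegral p g t) = logFirstIntegral p g t := by
  have h1g := sub_pos.2 hg.2
  rw [firstIntegral, logFirstIntegral, log_mul (by positivity) (sqrt_pos.2 hg.1).ne',
    log_mul (by positivity) (by positivity), log_rpow ht, log_rpow h1g, log_sqrt hg.1.le]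
  ring

theorem hasDerivAt_logFirstIntegral {p t : ℝ} {g : ℝ → ℝ} (hp : 1 ≤ p) (ht : 0 < t)
    (hg : g t ∈ Ioo 0 1)
    (hode : HasDerivAt g (2 * (2 - p) * (g t - 1) * g t / (t + (p - 2) * t * g t)) t) :
    HasDerivAt (logFirstIntegral p g) 0 t := by
  obtain ⟨hg0, hg1⟩ := hg
  have h1g : 1 - g t ≠ 0 := (sub_pos.2 hg1).ne'
  have hfac : 0 < 1 + (p - 2) * g t := by nlinarith
  have hden : t + (p - 2) * t * g t ≠ 0 := by
    rw [show t + (p - 2) * t * g t = t * (1 + (p - 2) * g t) by ring]; positivity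
  have hfac' : 1 + g t * (p - 2) ≠ 0 := by rw [mul_comm]; exact hfac.ne'
  refine ((((hasDerivAt_log ht.ne').const_mul (2 - p)).add
    (((hode.const_sub 1).log h1g).const_mul ((1 - p) / 2))).add
    ((hode.log hg0.ne').const_mul (1 / 2))).congr_deriv ?_
  field_simp
  ring

theorem firstIntegral_eq {p a b : ℝ} {g : ℝ → ℝ} (hp : 1 ≤ p) (ha : 0 < a)
    (hg : ∀ t ∈ Icc a b, g t ∈ Ioo 0 1)
    (hode : ∀ t ∈ Icc a b,
      HasDerivAt g (2 * (2 - p) * (g t - 1) * g t / (t + (p - 2) * t * g t)) t) :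
    ∀ t ∈ Icc a b, firstIntegral p g t = firstIntegral p g a := by
  have hpos : ∀ t ∈ Icc a b, 0 < t := fun t ht => ha.trans_le ht.1
  have hderiv := fun t ht => hasDerivAt_logFirstIntegral hp (hpos t ht) (hg t ht) (hode t ht)
  have hconst := constant_of_has_deriv_right_zero
    (fun t ht => (hderiv t ht).continuousAt.continuousWithinAt)
    (fun t ht => (hderiv t (Ico_subset_Icc_self ht)).hasDerivWithinAt)
  intro t ht
  have ha' : a ∈ Icc a b := ⟨le_rfl, ht.1.trans ht.2⟩
  apply log_injOn_pos (firstIntegral_pos (hpos t ht) (hg t ht)) (firstIntegral_pos ha (hg a ha'))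
  rw [log_firstIntegral (hpos t ht) (hg t ht), log_firstIntegral ha (hg a ha')]
  exact hconst t ht

theorem mul_mul_one_div_sq_add_sq_rpow_eq_firstIntegral {p t x : ℝ} {g : ℝ → ℝ} (ht : 0 < t)
    (hg : g t ∈ Ioo 0 1) (hx : t * x = √(g t) / √(1 - g t)) :
    t * x * (1 / t ^ 2 + x ^ 2) ^ (p / 2 - 1) = firstIntegral p g t := by
  have h1g := sub_pos.2 hg.2
  have htx : 0 < t * x := hx ▸ div_pos (sqrt_pos.2 hg.1) (sqrt_pos.2 h1g)
  have hsum : 1 / t ^ 2 + x ^ 2 = (t ^ 2 * (1 - g t))⁻¹ := by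
    have : (t * x) ^ 2 = g t / (1 - g t) := by rw [hx, div_pow, sq_sqrt hg.1.le, sq_sqrt h1g.le]
    field_simp
    rw [mul_pow] at this
    field_simp at this
    linear_combination this
  have hprod : 0 < t ^ 2 * (1 - g t) := by positivity
  apply log_injOn_pos (mul_pos htx (rpow_pos_of_pos (hsum ▸ inv_pos.2 hprod) _))
    (firstIntegral_pos ht hg)
  rw [log_firstIntegral ht hg, logFirstIntegral, hsum,
    log_mul htx.ne' (rpow_pos_of_pos (inv_pos.2 hprod) _).ne', hx, log_rpow (inv_pos.2 hprod),
    log_inv, log_mul (pow_pos ht 2).ne' h1g.ne', log_pow,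
    log_div (sqrt_pos.2 hg.1).ne' (sqrt_pos.2 h1g).ne', log_sqrt hg.1.le, log_sqrt h1g.le]
  push_cast
  ring

theorem radialEnergyDensity_add_mul_firstIntegral_le {p t x y : ℝ} {g : ℝ → ℝ} (hp1 : 1 ≤ p)
    (hp2 : p ≤ 2) (ht : 0 < t) (hg : g t ∈ Ioo 0 1) (hx : t * x = √(g t) / √(1 - g t)) :
    radialEnergyDensity p t x + p * firstIntegral p g t * (y - x) ≤ radialEnergyDensity p t y := by
  have hxpos : 0 < x := pos_of_mul_pos_right
    (hx ▸ div_pos (sqrt_pos.2 hg.1) (sqrt_pos.2 (sub_pos.2 hg.2))) ht.le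
  have htangent := mul_le_mul_of_nonneg_left
    (rpow_add_sq_tangent_le hp1 hp2 (by positivity : 0 < 1 / t ^ 2) hxpos y) ht.le
  rw [radialEnergyDensity, radialEnergyDensity,
    ← mul_mul_one_div_sq_add_sq_rpow_eq_firstIntegral ht hg hx]
  linarith

theorem intervalIntegrable_radialEnergyDensity {p a b : ℝ} {y : ℝ → ℝ} (ha : 0 < a)
    (hab : a ≤ b) (hy : ContinuousOn y (Icc a b)) :
    IntervalIntegrable (fun t => radialEnergyDensity p t (y t)) volume a b := by
  have hpos : ∀ t ∈ Icc a b, 0 < t := fun t ht => ha.trans_le ht.1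
  refine ContinuousOn.intervalIntegrable_of_Icc hab (continuousOn_id.mul ?_)
  refine ContinuousOn.rpow_const ?_ fun t ht => Or.inl (by have := hpos t ht; positivity)
  exact (continuousOn_const.div (continuousOn_id.pow 2)
    fun t ht => pow_ne_zero 2 (hpos t ht).ne').add (hy.pow 2)

theorem integral_le_integral_of_le_add_mul_deriv {f f₀ u u' : ℝ → ℝ} {a b c : ℝ} (hab : a ≤ b)
    (hu : ∀ t ∈ Icc a b, HasDerivAt u (u' t) t) (hu_eq : u a = u b)
    (hf : IntervalIntegrable f volume a b) (hf₀ : IntervalIntegrable f₀ volume a b)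
    (hu' : IntervalIntegrable u' volume a b) (hle : ∀ t ∈ Icc a b, f₀ t + c * u' t ≤ f t) :
    ∫ t in a..b, f₀ t ≤ ∫ t in a..b, f t := by
  have hu'_zero : ∫ t in a..b, u' t = 0 := by
    rw [integral_eq_sub_of_hasDerivAt (by rwa [uIcc_of_le hab]) hu', hu_eq, sub_self]
  calc ∫ t in a..b, f₀ t = ∫ t in a..b, (f₀ t + c * u' t) := by
        rw [integral_add hf₀ (hu'.const_mul c), integral_const_mul, hu'_zero, mul_zero, add_zero]
    _ ≤ ∫ t in a..b, f t := integral_mono_on hab (hf₀.add (hu'.const_mul c)) hf hle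

theorem radial_p_energy_minimization_general (p r R : ℝ) (hp1 : 1 < p) (hp2 : p < 2)
    (hr : 1 < r)
    (g : ℝ → ℝ)
    (hgrange : ∀ t ∈ Icc 1 r, g t ∈ Ioo (0 : ℝ) 1)
    (hgode : ∀ t ∈ Icc 1 r,
      HasDerivAt g (2 * (2 - p) * (g t - 1) * g t / (t + (p - 2) * t * g t)) t)
    (H H' : ℝ → ℝ)
    (hH : ∀ t ∈ Icc 1 r, HasDerivAt H (H' t) t)
    (hH'c : ContinuousOn H' (Icc 1 r))
    (hHpos : ∀ t ∈ Icc 1 r, 0 < H t)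
    (hH1 : H 1 = 1) (hHr : H r = R)
    (H₀ H₀' : ℝ → ℝ)
    (hH₀ : ∀ t ∈ Icc 1 r, HasDerivAt H₀ (H₀' t) t)
    (hH₀pos : ∀ t ∈ Icc 1 r, 0 < H₀ t)
    (hH₀ode : ∀ t ∈ Icc 1 r,
      t * H₀' t / H₀ t = Real.sqrt (g t) / Real.sqrt (1 - g t))
    (hH₀1 : H₀ 1 = 1) (hH₀r : H₀ r = R) :
    ∫ t in (1 : ℝ)..r, t * (1 / t ^ 2 + (H' t) ^ 2 / (H t) ^ 2) ^ (p / 2)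
      ≥ ∫ t in (1 : ℝ)..r, t * (1 / t ^ 2 + (H₀' t) ^ 2 / (H₀ t) ^ 2) ^ (p / 2) := by
  have htpos : ∀ t ∈ Icc (1 : ℝ) r, 0 < t := fun t ht => one_pos.trans_le ht.1
  have hH₀log : ∀ t ∈ Icc 1 r, t * (H₀' t / H₀ t) = √(g t) / √(1 - g t) := fun t ht => by
    rw [← mul_div_assoc]; exact hH₀ode t ht
  have hgcont : ContinuousOn g (Icc 1 r) := fun t ht =>
    (hgode t ht).continuousAt.continuousWithinAt
  have hHlogcont : ContinuousOn (fun t => H' t / H t) (Icc 1 r) :=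
    hH'c.div (fun t ht => (hH t ht).continuousAt.continuousWithinAt) fun t ht => (hHpos t ht).ne'
  have hH₀logcont : ContinuousOn (fun t => H₀' t / H₀ t) (Icc 1 r) := by
    refine ContinuousOn.congr (f := fun t => √(g t) / √(1 - g t) / t) ?_
      fun t ht => eq_div_of_mul_eq (htpos t ht).ne' (by rw [mul_comm]; exact hH₀log t ht)
    refine ((continuous_sqrt.comp_continuousOn hgcont).div
      (continuous_sqrt.comp_continuousOn (continuousOn_const.sub hgcont)) fun t ht => ?_).div
      continuousOn_id fun t ht => (htpos t ht).ne'
    exact (sqrt_pos.2 (sub_pos.2 (hgrange t ht).2)).ne'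
  simp only [← div_pow, ge_iff_le]
  refine integral_le_integral_of_le_add_mul_deriv (c := p * firstIntegral p g 1)
    (u := fun t => log (H t) - log (H₀ t)) hr.le
    (fun t ht => ((hH t ht).log (hHpos t ht).ne').sub ((hH₀ t ht).log (hH₀pos t ht).ne'))
    (by simp only [hH1, hHr, hH₀1, hH₀r, sub_self])
    (intervalIntegrable_radialEnergyDensity one_pos hr.le hHlogcont)
    (intervalIntegrable_radialEnergyDensity one_pos hr.le hH₀logcont)
    ((hHlogcont.sub hH₀logcont).intervalIntegrable_of_Icc hr.le) fun t ht => ?_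
  rw [← firstIntegral_eq hp1.le one_pos hgrange hgode t ht]
  exact radialEnergyDensity_add_mul_firstIntegral_le hp1.le hp2.le (htpos t ht) (hgrange t ht)
    (hH₀log t ht)

theorem radial_p_energy_minimization (p r R : ℝ) (hp1 : 1 < p) (hp2 : p < 2)
    (hr : 1 < r) (hR : 1 < R)
    (g : ℝ → ℝ)
    (hgrange : ∀ t ∈ Icc 1 r, g t ∈ Ioo (0 : ℝ) 1)
    (hgode : ∀ t ∈ Icc 1 r,
      HasDerivAt g (2 * (2 - p) * (g t - 1) * g t / (t + (p - 2) * t * g t)) t)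
    (H H' : ℝ → ℝ)
    (hH : ∀ t ∈ Icc 1 r, HasDerivAt H (H' t) t)
    (hH'c : ContinuousOn H' (Icc 1 r))
    (hHinc : StrictMonoOn H (Icc 1 r))
    (hHpos : ∀ t ∈ Icc 1 r, 0 < H t)
    (hH1 : H 1 = 1) (hHr : H r = R)
    (H₀ H₀' : ℝ → ℝ)
    (hH₀ : ∀ t ∈ Icc 1 r, HasDerivAt H₀ (H₀' t) t)
    (hH₀pos : ∀ t ∈ Icc 1 r, 0 < H₀ t)
    (hH₀ode : ∀ t ∈ Icc 1 r,
      t * H₀' t / H₀ t = Real.sqrt (g t) / Real.sqrt (1 - g t))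
    (hH₀1 : H₀ 1 = 1) (hH₀r : H₀ r = R) :
    ∫ t in (1 : ℝ)..r, t * (1 / t ^ 2 + (H' t) ^ 2 / (H t) ^ 2) ^ (p / 2)
      ≥ ∫ t in (1 : ℝ)..r, t * (1 / t ^ 2 + (H₀' t) ^ 2 / (H₀ t) ^ 2) ^ (p / 2) :=
  radial_p_energy_minimization_general p r R hp1 hp2 hr g hgrange hgode H H' hH hH'c hHpos hH1 hHr
    H₀ H₀' hH₀ hH₀pos hH₀ode hH₀1 hH₀r
end

section
/- Let r > 1 and suppose log R > π/2 − arctan(1/√(r²−1)). Then there is no b ≥ 1 and no solution H of t·H'(t)/H(t) = 1/√(b²t²−1) on [1,r] with H(1) = 1 and H(r) = R; consequently, no radial homeomorphic critical point of the weighted 1-Dirichlet energy exists between A(1,r) and A(1,R). -/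
/-!
Along a solution, `log H t - arctan √(b²t² - 1)` has zero derivative on `(1, r)`, so
`log R = arctan √(b²r² - 1) - arctan √(b² - 1)`. Since `arctan √(u² - 1) = arccos u⁻¹` for `u ≥ 1`,
this is `arccos (b r)⁻¹ - arccos b⁻¹`, and the cosine addition formula gives
`arccos (x y) ≤ arccos x + arccos y`; hence `log R ≤ arccos r⁻¹ = π/2 - arctan (1/√(r² - 1))`.
-/

open Real Set

lemma one_lt_sq_mul_sq {b t : ℝ} (hb : 1 ≤ b) (ht : 1 < t) : 1 < b ^ 2 * t ^ 2 :=
  one_lt_mul_of_le_of_lt (one_le_pow₀ hb) (one_lt_pow₀ ht two_ne_zero)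

lemma hasDerivAt_arctan_sqrt_sq_mul_sq_sub_one {b t : ℝ} (h : 1 < b ^ 2 * t ^ 2) :
    HasDerivAt (fun t => arctan √(b ^ 2 * t ^ 2 - 1)) (1 / (t * √(b ^ 2 * t ^ 2 - 1))) t := by
  have hpos : 0 < b ^ 2 * t ^ 2 - 1 := by linarith
  have ht : t ≠ 0 := by rintro rfl; simp at h; linarith
  have hb : b ≠ 0 := by rintro rfl; simp at h; linarith
  have hsq := ((((hasDerivAt_pow 2 t).const_mul (b ^ 2)).sub_const 1).sqrt hpos.ne').arctan
  convert hsq using 1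
  rw [sq_sqrt hpos.le]
  have : √(b ^ 2 * t ^ 2 - 1) ≠ 0 := (sqrt_pos.2 hpos).ne'
  field_simp
  ring

lemma arctan_sqrt_sq_sub_one {u : ℝ} (hu : 1 ≤ u) : arctan √(u ^ 2 - 1) = arccos u⁻¹ := by
  have hu0 : 0 < u := by linarith
  rw [arccos_eq_arctan (inv_pos.2 hu0)]
  congr 1
  rw [div_inv_eq_mul, ← sqrt_sq hu0.le, ← sqrt_mul', sqrt_sq hu0.le]
  · congr 1; field_simp
  · positivity

lemma arccos_mul_le_arccos_add_arccos {x y : ℝ} (hx₁ : -1 ≤ x) (hx₂ : x ≤ 1)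
    (hy₁ : -1 ≤ y) (hy₂ : y ≤ 1) : arccos (x * y) ≤ arccos x + arccos y := by
  rcases le_or_gt π (arccos x + arccos y) with hπ | hπ
  · exact (arccos_le_pi _).trans hπ
  have hcos : cos (arccos x + arccos y) ≤ x * y := by
    rw [cos_add, cos_arccos hx₁ hx₂, cos_arccos hy₁ hy₂]
    have := mul_nonneg (sin_arccos x ▸ sqrt_nonneg _) (sin_arccos y ▸ sqrt_nonneg _)
    linarith
  calc arccos (x * y) ≤ arccos (cos (arccos x + arccos y)) := antitone_arccos hcos
    _ = arccos x + arccos y := arccos_cos (add_nonneg (arccos_nonneg x) (arccos_nonneg y)) hπ.le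

lemma arctan_sqrt_sub_arctan_sqrt_le {b r : ℝ} (hb : 1 ≤ b) (hr : 1 ≤ r) :
    arctan √(b ^ 2 * r ^ 2 - 1) - arctan √(b ^ 2 - 1) ≤ arctan √(r ^ 2 - 1) := by
  have hbr : 1 ≤ b * r := one_le_mul_of_one_le_of_one_le hb hr
  have hunit {u : ℝ} (hu : 1 ≤ u) : -1 ≤ u⁻¹ ∧ u⁻¹ ≤ 1 :=
    ⟨by linarith [inv_nonneg.2 (zero_le_one.trans hu)], inv_le_one_of_one_le₀ hu⟩
  rw [← mul_pow, arctan_sqrt_sq_sub_one hbr, arctan_sqrt_sq_sub_one hb,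
    arctan_sqrt_sq_sub_one hr, mul_inv, sub_le_iff_le_add']
  exact arccos_mul_le_arccos_add_arccos (hunit hb).1 (hunit hb).2 (hunit hr).1 (hunit hr).2

lemma log_eq_arctan_sqrt_sub_arctan_sqrt {b r : ℝ} {H H' : ℝ → ℝ} (hb : 1 ≤ b) (hr : 1 < r)
    (hH : ∀ t ∈ Icc 1 r, HasDerivAt H (H' t) t)
    (hode : ∀ t ∈ Icc 1 r, t * H' t / H t = 1 / √(b ^ 2 * t ^ 2 - 1)) (hH1 : H 1 = 1) :
    log (H r) = arctan √(b ^ 2 * r ^ 2 - 1) - arctan √(b ^ 2 - 1) := by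
  have hH0 : ∀ t ∈ Icc 1 r, H t ≠ 0 := by
    rintro t ⟨ht1, htr⟩ hHt
    rcases ht1.eq_or_lt with rfl | ht1
    · simp [hH1] at hHt
    have hpos : 0 < 1 / √(b ^ 2 * t ^ 2 - 1) := by
      have := one_lt_sq_mul_sq hb ht1
      positivity
    have hodet := hode t ⟨ht1.le, htr⟩
    rw [hHt, div_zero] at hodet
    linarith
  set g : ℝ → ℝ := fun t => log (H t) - arctan √(b ^ 2 * t ^ 2 - 1)
  have hg : ContinuousOn g (Icc 1 r) :=
    ((ContinuousOn.log (fun t ht => (hH t ht).continuousAt.continuousWithinAt) hH0).sub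
      (by fun_prop))
  have hg' : ∀ t ∈ Ioo 1 r, HasDerivAt g 0 t := by
    intro t ht
    have ht' : t ∈ Icc 1 r := Ioo_subset_Icc_self ht
    have hbt := one_lt_sq_mul_sq hb ht.1
    refine (((hH t ht').log (hH0 t ht')).sub
      (hasDerivAt_arctan_sqrt_sq_mul_sq_sub_one hbt)).congr_deriv ?_
    have : t ≠ 0 := by linarith [ht.1]
    rw [sub_eq_zero, mul_comm t, ← div_div, ← hode t ht']
    field_simp
  obtain ⟨c, -, hc⟩ := exists_hasDerivAt_eq_slope g (fun _ => 0) hr hg hg'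
  have hconst : g r = g 1 := by
    rcases div_eq_zero_iff.1 hc.symm with hc | hc <;> linarith
  simp only [g, hH1, log_one, one_pow, mul_one] at hconst
  linarith

theorem no_radial_minimizer_p_one (r R : ℝ) (hr : 1 < r)
    (hR : Real.pi / 2 - Real.arctan (1 / Real.sqrt (r ^ 2 - 1)) < Real.log R) :
    ¬ ∃ b : ℝ, 1 ≤ b ∧ ∃ H H' : ℝ → ℝ,
      (∀ t ∈ Icc 1 r, HasDerivAt H (H' t) t) ∧
      (∀ t ∈ Icc 1 r, t * H' t / H t = 1 / Real.sqrt (b ^ 2 * t ^ 2 - 1)) ∧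
      H 1 = 1 ∧ H r = R := by
  rintro ⟨b, hb, H, H', hH, hode, hH1, rfl⟩
  have hlog := log_eq_arctan_sqrt_sub_arctan_sqrt hb hr hH hode hH1
  have hsup := arctan_sqrt_sub_arctan_sqrt_le hb hr.le
  have hcot : π / 2 - arctan (1 / √(r ^ 2 - 1)) = arctan √(r ^ 2 - 1) := by
    rw [one_div, arctan_inv_of_pos (sqrt_pos.2 (by nlinarith))]
    ring
  linarith
end
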